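/- arXiv:2312.09206 — 3 statements merged into one kernel-verified Lean document; each statement's English description precedes it below -/
import Mathlib

section
/- For t-element subsets α, β of [N] and m with |α∪β| ≤ m ≤ N, the expectation over uniformly random m-element subsets S ⊆ [N] of ⟨α|(|S⟩⟨S|)^{⊗t}|β⟩ equals (t!/m^t) · C(N - |α∪β|, m - |α∪β|) / C(N, m). -/
open Finset

/-- The subset state `|S⟩ = |S|^{-1/2} ∑_{x∈S} |x⟩` as a vector in `ℂ^N`. -/
noncomputable def subsetState (N : ℕ) (S : Finset (Fin N)) : Fin N → ℂ :=
  fun x => if x ∈ S then (1 / Real.sqrt S.card : ℂ) else 0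

/-- The unique-type symmetric basis state `|α⟩ = (t!)^{-1/2} ∑_{σ ∈ S_t} σ|x₁,…,x_t⟩`
for a `t`-element subset `α ⊆ [N]`, as a vector in `(ℂ^N)^{⊗t}`. -/
noncomputable def uniqueTypeState (N t : ℕ) (α : Finset (Fin N)) : (Fin t → Fin N) → ℂ :=
  fun x => if Function.Injective x ∧ Finset.image x Finset.univ = α
    then (1 / Real.sqrt (t.factorial) : ℂ) else 0

lemma card_filter_inj (N t : ℕ) (α : Finset (Fin N)) (hα : α.card = t) :
    (Finset.univ.filter (fun x : Fin t → Fin N => Function.Injective x ∧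
      Finset.image x Finset.univ = α)).card = t.factorial := by
  have hft : Fintype.card {a // a ∈ α} = t := by simp [hα]
  have := Fintype.card_embedding_eq (α := Fin t) (β := {a // a ∈ α})
  rw [hft, Fintype.card_fin, Nat.descFactorial_self] at this
  rw [← this, ← Finset.card_univ]
  apply Finset.card_bij' (i := fun x hx => (⟨fun i => ⟨x i, by
      have := (Finset.mem_filter.1 hx).2.2
      rw [← this]; exact Finset.mem_image_of_mem x (Finset.mem_univ i)⟩,
      fun i j h => (Finset.mem_filter.1 hx).2.1 (congrArg Subtype.val h)⟩ : Fin t ↪ {a // a ∈ α}))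
    (j := fun e _ => fun i => (e i : Fin N))
  case hi => intro x hx; exact Finset.mem_univ _
  case hj =>
    intro e he
    rw [Finset.mem_filter]
    refine ⟨Finset.mem_univ _, fun i j h => e.injective (Subtype.ext h), ?_⟩
    apply Finset.eq_of_subset_of_card_le
    · intro a ha
      obtain ⟨i, -, rfl⟩ := Finset.mem_image.1 ha
      exact (e i).2
    · rw [hα, Finset.card_image_of_injective _ (fun i j h => e.injective (Subtype.ext h)),
        Finset.card_univ, Fintype.card_fin]
  case left_inv => intro x hx; rfl
  case right_inv => intro e he; ext i : 1; rfl

lemma conj_subsetState (N : ℕ) (S : Finset (Fin N)) (y : Fin N) :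
    (starRingEnd ℂ) (subsetState N S y) = subsetState N S y := by
  unfold subsetState; split_ifs <;> simp

lemma conj_uniqueTypeState (N t : ℕ) (α : Finset (Fin N)) (x : Fin t → Fin N) :
    (starRingEnd ℂ) (uniqueTypeState N t α x) = uniqueTypeState N t α x := by
  unfold uniqueTypeState; split_ifs <;> simp

lemma inner_sum_eval (N t m : ℕ) (S α : Finset (Fin N)) (hS : S.card = m) (hα : α.card = t) :
    ∑ x : Fin t → Fin N, uniqueTypeState N t α x * ∏ i, subsetState N S (x i)
    = if α ⊆ S then (t.factorial : ℂ) *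
        ((1 / Real.sqrt t.factorial : ℂ) * (1 / Real.sqrt m : ℂ) ^ t) else 0 := by
  have key : ∀ x : Fin t → Fin N, uniqueTypeState N t α x * ∏ i, subsetState N S (x i)
      = if (Function.Injective x ∧ Finset.image x Finset.univ = α)
        then (if α ⊆ S then (1 / Real.sqrt t.factorial : ℂ) * (1 / Real.sqrt m : ℂ) ^ t
          else 0) else 0 := by
    intro x
    unfold uniqueTypeState subsetState
    by_cases hx : Function.Injective x ∧ Finset.image x Finset.univ = α
    · simp only [hx, if_true, and_self]
      by_cases hsub : α ⊆ S
      · simp only [hsub, if_true]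
        congr 1
        have h1 : ∀ i : Fin t,
            (if x i ∈ S then (1 / Real.sqrt S.card : ℂ) else 0) = (1 / Real.sqrt m : ℂ) := by
          intro i
          rw [if_pos (hsub (hx.2 ▸ Finset.mem_image_of_mem x (Finset.mem_univ i))), hS]
        rw [Finset.prod_congr rfl (fun i _ => h1 i), Finset.prod_const, Finset.card_univ,
          Fintype.card_fin]
      · simp only [hsub, if_false]
        obtain ⟨a, haα, haS⟩ := Finset.not_subset.1 hsub
        obtain ⟨i, -, rfl⟩ := Finset.mem_image.1 (hx.2 ▸ haα)
        have hz : (if x i ∈ S then (1 / Real.sqrt S.card : ℂ) else 0) = 0 := if_neg haS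
        rw [Finset.prod_eq_zero (Finset.mem_univ i) hz, mul_zero]
    · simp [hx]
  rw [Finset.sum_congr rfl (fun x _ => key x), Finset.sum_ite, Finset.sum_const,
    Finset.sum_const_zero, add_zero]
  have hc : (Finset.univ.filter (fun x : Fin t → Fin N => Function.Injective x ∧
      Finset.image x Finset.univ = α)).card = t.factorial := card_filter_inj N t α hα
  rw [hc]
  split_ifs <;> simp [nsmul_eq_mul]

lemma card_supersets (N m : ℕ) (A : Finset (Fin N)) (hA : A.card ≤ m) :
    ((Finset.univ.powersetCard m).filter (fun S => A ⊆ S)).card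
      = (N - A.card).choose (m - A.card) := by
  have hcard : (Finset.univ \ A : Finset (Fin N)).card = N - A.card := by
    rw [Finset.card_sdiff_of_subset (Finset.subset_univ A), Finset.card_univ, Fintype.card_fin]
  rw [← hcard, ← Finset.card_powersetCard (m - A.card) (Finset.univ \ A)]
  apply Finset.card_bij' (i := fun S _ => S \ A) (j := fun T _ => T ∪ A)
  case hi =>
    intro S hS
    rw [Finset.mem_filter, Finset.mem_powersetCard] at hS
    rw [Finset.mem_powersetCard]
    exact ⟨Finset.sdiff_subset_sdiff hS.1.1 le_rfl,
      by rw [Finset.card_sdiff_of_subset hS.2, hS.1.2]⟩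
  case hj =>
    intro T hT
    rw [Finset.mem_powersetCard] at hT
    have hdisj : Disjoint T A := Finset.disjoint_left.2 fun a haT =>
      (Finset.mem_sdiff.1 (hT.1 haT)).2
    rw [Finset.mem_filter, Finset.mem_powersetCard]
    refine ⟨⟨Finset.subset_univ _, ?_⟩, Finset.subset_union_right⟩
    rw [Finset.card_union_of_disjoint hdisj, hT.2, Nat.sub_add_cancel hA]
  case left_inv =>
    intro S hS
    rw [Finset.mem_filter] at hS
    exact Finset.sdiff_union_of_subset hS.2
  case right_inv =>
    intro T hT
    rw [Finset.mem_powersetCard] at hT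
    have hdisj : Disjoint T A := Finset.disjoint_left.2 fun a haT =>
      (Finset.mem_sdiff.1 (hT.1 haT)).2
    rw [Finset.union_sdiff_right, Finset.sdiff_eq_self_of_disjoint hdisj]

/-- The expectation, over uniformly random `m`-element subsets `S ⊆ [N]`, of the matrix
entry `⟨α|(|S⟩⟨S|)^{⊗t}|β⟩ = ⟨α|S^{⊗t}⟩⟨S^{⊗t}|β⟩` equals
`(t!/m^t) · C(N - |α∪β|, m - |α∪β|) / C(N,m)`. -/
theorem stmt3 (N t m : ℕ) (hm : 0 < m) (hmN : m ≤ N)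
    (α β : Finset (Fin N)) (hα : α.card = t) (hβ : β.card = t)
    (hunion : (α ∪ β).card ≤ m) :
    (1 / (N.choose m : ℂ)) * ∑ S ∈ Finset.univ.powersetCard m,
        ((∑ x : Fin t → Fin N,
            (starRingEnd ℂ) (uniqueTypeState N t α x) * ∏ i, subsetState N S (x i))
          * (∑ x : Fin t → Fin N,
            (starRingEnd ℂ) (∏ i, subsetState N S (x i)) * uniqueTypeState N t β x))
      = ((t.factorial : ℂ) / (m : ℂ) ^ t)
          * ((N - (α ∪ β).card).choose (m - (α ∪ β).card) : ℂ) / (N.choose m : ℂ) := by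
  set c : ℂ := (t.factorial : ℂ) *
    ((1 / Real.sqrt t.factorial : ℂ) * (1 / Real.sqrt m : ℂ) ^ t) with hc
  have hstep : ∀ S ∈ Finset.univ.powersetCard m,
      ((∑ x : Fin t → Fin N,
          (starRingEnd ℂ) (uniqueTypeState N t α x) * ∏ i, subsetState N S (x i))
        * (∑ x : Fin t → Fin N,
          (starRingEnd ℂ) (∏ i, subsetState N S (x i)) * uniqueTypeState N t β x))
      = if α ∪ β ⊆ S then c * c else 0 := by
    intro S hS
    rw [Finset.mem_powersetCard] at hS
    have h1 : (∑ x : Fin t → Fin N,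
        (starRingEnd ℂ) (uniqueTypeState N t α x) * ∏ i, subsetState N S (x i))
        = if α ⊆ S then c else 0 := by
      simp_rw [conj_uniqueTypeState]
      exact inner_sum_eval N t m S α hS.2 hα
    have h2 : (∑ x : Fin t → Fin N,
        (starRingEnd ℂ) (∏ i, subsetState N S (x i)) * uniqueTypeState N t β x)
        = if β ⊆ S then c else 0 := by
      simp_rw [map_prod, conj_subsetState, mul_comm]
      exact inner_sum_eval N t m S β hS.2 hβ
    rw [h1, h2]
    by_cases hu : α ∪ β ⊆ S
    · obtain ⟨ha, hb⟩ := Finset.union_subset_iff.1 hu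
      rw [if_pos ha, if_pos hb, if_pos hu]
    · rw [if_neg hu]
      rw [Finset.union_subset_iff, not_and_or] at hu
      rcases hu with h | h
      · rw [if_neg h, zero_mul]
      · rw [if_neg h, mul_zero]
  rw [Finset.sum_congr rfl hstep, Finset.sum_ite, Finset.sum_const, Finset.sum_const_zero,
    add_zero, card_supersets N m (α ∪ β) hunion, nsmul_eq_mul]
  have hcc : c * c = (t.factorial : ℂ) / (m : ℂ) ^ t := by
    have h1 : ((Real.sqrt t.factorial : ℝ) : ℂ) * ((Real.sqrt t.factorial : ℝ) : ℂ)
        = (t.factorial : ℂ) := by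
      rw [← Complex.ofReal_mul, Real.mul_self_sqrt (Nat.cast_nonneg _)]
      norm_num
    have h2 : ((Real.sqrt m : ℝ) : ℂ) * ((Real.sqrt m : ℝ) : ℂ) = (m : ℂ) := by
      rw [← Complex.ofReal_mul, Real.mul_self_sqrt (Nat.cast_nonneg _)]
      norm_num
    have ht0 : (t.factorial : ℂ) ≠ 0 := Nat.cast_ne_zero.2 t.factorial_ne_zero
    have hm0 : (m : ℂ) ≠ 0 := Nat.cast_ne_zero.2 hm.ne'
    have hrw : c * c = ((t.factorial : ℂ) * (t.factorial : ℂ))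
        * (((Real.sqrt t.factorial : ℝ) : ℂ) * ((Real.sqrt t.factorial : ℝ) : ℂ))⁻¹
        * ((((Real.sqrt m : ℝ) : ℂ) * ((Real.sqrt m : ℝ) : ℂ))⁻¹) ^ t := by
      rw [hc]; ring
    rw [hrw, h1, h2, inv_pow]
    field_simp
  rw [hcc]
  ring
end

section
/- For 0 ≤ t ≤ N/2, the ratio (C(N,t) - C(N,t-1)) / C(N+t-1, t) equals 1 - O(t²/N); more precisely, C(N,t) - C(N,t-1) ≥ C(N+t-1,t) · (1 - c·t²/N) for an absolute constant c and all N ≥ 2t². -/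
lemma aux_choose_pow (t m : ℕ) : ∀ j, (t + m + j).choose t * m ^ j ≤ (t + m).choose t * (t + m) ^ j := by
  intro j
  induction j with
  | zero => simp
  | succ j ih =>
    have hpos : 0 < m + j + 1 := by omega
    apply Nat.le_of_mul_le_mul_right _ hpos
    have hid : (t + m + j).choose t * (t + m + j + 1) =
        (t + m + j + 1).choose t * (m + j + 1) := by
      have h := Nat.choose_mul_succ_eq (t + m + j) t
      have he : t + m + j + 1 - t = m + j + 1 := by omega
      rw [he] at h
      exact h
    calc (t + m + (j + 1)).choose t * m ^ (j + 1) * (m + j + 1)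
        = ((t + m + j + 1).choose t * (m + j + 1)) * (m ^ j * m) := by
          rw [pow_succ]; ring
      _ = ((t + m + j).choose t * m ^ j) * ((t + m + j + 1) * m) := by rw [← hid]; ring
      _ ≤ ((t + m).choose t * (t + m) ^ j) * ((t + m + j + 1) * m) :=
          Nat.mul_le_mul_right _ ih
      _ ≤ ((t + m).choose t * (t + m) ^ j) * ((t + m) * (m + j + 1)) := by
          apply Nat.mul_le_mul_left
          nlinarith
      _ = (t + m).choose t * (t + m) ^ (j + 1) * (m + j + 1) := by
          rw [pow_succ]; ring

/-- The largest irrep block occupies most of the symmetric subspace: there is an absolute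
constant `c` such that for all `N ≥ 2t²` with `2t ≤ N`,
`C(N,t) - C(N,t-1) ≥ C(N+t-1,t)·(1 - c·t²/N)` (so their ratio is `1 - O(t²/N)`). -/
theorem stmt11 :
    ∃ c : ℝ, 0 < c ∧ ∀ N t : ℕ, 2 * t ≤ N → 2 * t ^ 2 ≤ N →
      ((N.choose t : ℝ) - (if t = 0 then 0 else (N.choose (t - 1) : ℝ)))
        ≥ ((N + t - 1).choose t : ℝ) * (1 - c * (t : ℝ) ^ 2 / (N : ℝ)) := by
  refine ⟨3, by norm_num, ?_⟩
  intro N t h2t h2t2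
  by_cases ht : t = 0
  · subst ht
    simp
  · simp only [if_neg ht]
    have ht1 : 1 ≤ t := Nat.one_le_iff_ne_zero.mpr ht
    have htN : t ≤ N := by omega
    obtain ⟨m, hm⟩ : ∃ m, N = t + m := ⟨N - t, by omega⟩
    have htm : t ≤ m := by nlinarith [sq_nonneg t]
    have hK : (t + m + (t - 1)).choose t * m ^ (t - 1) ≤ (t + m).choose t * (t + m) ^ (t - 1) :=
      aux_choose_pow t m (t - 1)
    have hidx : N + t - 1 = t + m + (t - 1) := by omega
    have hF1 : N.choose t * t = N.choose (t - 1) * (m + 1) := by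
      have h := Nat.choose_succ_right_eq N (t - 1)
      have h1 : t - 1 + 1 = t := by omega
      have h2 : N - (t - 1) = m + 1 := by omega
      rw [h1, h2] at h
      exact h
    set a : ℝ := (N.choose t : ℝ) with ha
    set b : ℝ := (N.choose (t - 1) : ℝ) with hb
    set d : ℝ := ((N + t - 1).choose t : ℝ) with hd
    have hNR : (N : ℝ) = (t : ℝ) + m := by rw [hm]; push_cast; ring
    have hNpos : (0 : ℝ) < N := by
      have : 0 < N := by omega
      exact_mod_cast this
    have hd0 : (0 : ℝ) ≤ d := by positivity
    have ha0 : (0 : ℝ) ≤ a := by positivity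
    have hb0 : (0 : ℝ) ≤ b := by positivity
    have hKR : d * (m : ℝ) ^ (t - 1) ≤ a * (N : ℝ) ^ (t - 1) := by
      rw [hd, hidx, ha, hm]
      exact_mod_cast hK
    have hF1R : a * (t : ℝ) = b * ((m : ℝ) + 1) := by
      rw [ha, hb]
      exact_mod_cast hF1
    have hBern : (1 : ℝ) - ((t : ℝ) - 1) * t / N ≤ ((m : ℝ) / N) ^ (t - 1) := by
      have hx : (-2 : ℝ) ≤ -(t / N) := by
        have : (t : ℝ) / N ≤ 1 := by
          rw [div_le_one hNpos]
          exact_mod_cast htN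
        linarith
      have h := one_add_mul_le_pow hx (t - 1)
      have hm1 : ((m : ℝ) / N) = 1 + (-(t / N)) := by
        field_simp
        linarith [hNR]
      rw [hm1]
      have hcast : ((t - 1 : ℕ) : ℝ) = (t : ℝ) - 1 := by
        have := Nat.cast_sub ht1 (R := ℝ)
        simpa using this
      calc (1 : ℝ) - ((t : ℝ) - 1) * t / N = 1 + ((t - 1 : ℕ) : ℝ) * (-(t / N)) := by
            rw [hcast]; ring
        _ ≤ (1 + -(t / N)) ^ (t - 1) := h
    have hA : d * (1 - ((t : ℝ) - 1) * t / N) ≤ a := by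
      have hpowpos : (0 : ℝ) < (N : ℝ) ^ (t - 1) := by positivity
      have h1 : d * ((m : ℝ) / N) ^ (t - 1) ≤ a := by
        rw [div_pow, ← mul_div_assoc, div_le_iff₀ hpowpos]
        exact hKR
      have h2 : d * (1 - ((t : ℝ) - 1) * t / N) ≤ d * ((m : ℝ) / N) ^ (t - 1) :=
        mul_le_mul_of_nonneg_left hBern hd0
      linarith
    -- clear denominators
    have hA' : d * (((t : ℝ) + m) - ((t : ℝ) - 1) * t) ≤ a * ((t : ℝ) + m) := by
      have := mul_le_mul_of_nonneg_right hA (le_of_lt hNpos)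
      have he : d * (1 - ((t : ℝ) - 1) * t / N) * N = d * ((N : ℝ) - ((t : ℝ) - 1) * t) := by
        field_simp
      rw [he, hNR] at this
      linarith [this]
    have htR : (1 : ℝ) ≤ t := by exact_mod_cast ht1
    have ht0R : (0 : ℝ) ≤ t := by linarith
    have hm0R : (0 : ℝ) ≤ m := by positivity
    have htmR : (t : ℝ) ≤ m := by exact_mod_cast htm
    have h2t2R : 2 * (t : ℝ) ^ 2 ≤ (t : ℝ) + m := by
      have : 2 * (t : ℝ) ^ 2 ≤ N := by exact_mod_cast h2t2
      linarith [hNR]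
    rw [ge_iff_le, ← sub_nonneg]
    set u : ℝ := d * (1 - 3 * (t : ℝ) ^ 2 / N) with hu_def
    have hu : u * ((t : ℝ) + m) = d * (((t : ℝ) + m) - 3 * t ^ 2) := by
      rw [hu_def, ← hNR]
      field_simp
    have h7' : a * (t : ℝ) * ((t : ℝ) + m) = b * ((m : ℝ) + 1) * ((t : ℝ) + m) := by
      rw [hF1R]
    have h8' : u * ((t : ℝ) + m) * ((m : ℝ) + 1)
        = d * (((t : ℝ) + m) - 3 * t ^ 2) * ((m : ℝ) + 1) := by
      rw [hu]
    have h5 : d * (((t : ℝ) + m) - ((t : ℝ) - 1) * t) * ((m : ℝ) + 1 - t)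
        ≤ a * ((t : ℝ) + m) * ((m : ℝ) + 1 - t) :=
      mul_le_mul_of_nonneg_right hA' (by linarith)
    have e : (a - b - u) * (((t : ℝ) + m) * ((m : ℝ) + 1))
        = (a * ((t : ℝ) + m) * ((m : ℝ) + 1 - t)
            - d * (((t : ℝ) + m) - ((t : ℝ) - 1) * t) * ((m : ℝ) + 1 - t))
          + d * ((t : ℝ) ^ 3 + t + 2 * t ^ 2 * m) := by
      linear_combination ((t : ℝ) + m) * hF1R - ((m : ℝ) + 1) * hu
    have h9 : 0 ≤ d * ((t : ℝ) ^ 3 + t + 2 * t ^ 2 * m) :=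
      mul_nonneg hd0 (by positivity)
    have hprod : 0 ≤ (a - b - u) * (((t : ℝ) + m) * ((m : ℝ) + 1)) := by
      rw [e]; linarith [h5, h9]
    have hpos2 : (0 : ℝ) < ((t : ℝ) + m) * ((m : ℝ) + 1) := by positivity
    have h0 : 0 * (((t : ℝ) + m) * ((m : ℝ) + 1)) ≤ (a - b - u) * (((t : ℝ) + m) * ((m : ℝ) + 1)) := by
      linarith [hprod]
    exact le_of_mul_le_mul_right h0 hpos2
end

section
/- Let H = H₁ ⊕ H₂ be a finite-dimensional Hilbert space of dimension D = d₁ + d₂ with d₂/D ≤ ε. Let ρ be a density matrix on H whose compression to H₁ is δ-close in trace distance to Π₁/D (the H₁-block of the maximally mixed state): (1/2)‖Π₁ρΠ₁ - Π₁/D‖₁ ≤ δ. Then (1/2)‖ρ - I/D‖₁ ≤ 2δ + 2ε. -/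
open scoped ComplexOrder

/-- The trace norm (Schatten 1-norm, sum of singular values) of a complex matrix:
`‖A‖₁ = Tr √(AᴴA)`. -/
noncomputable def traceNorm {n : Type} [Fintype n] [DecidableEq n] (A : Matrix n n ℂ) : ℝ :=
  (((Matrix.posSemidef_conjTranspose_mul_self A).1.eigenvectorUnitary : Matrix n n ℂ) *
      Matrix.diagonal ((fun x : ℝ => (x : ℂ)) ∘ (Real.sqrt ∘ (Matrix.posSemidef_conjTranspose_mul_self A).1.eigenvalues)) *
      (star (Matrix.posSemidef_conjTranspose_mul_self A).1.eigenvectorUnitary : Matrix n n ℂ)).trace.re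

/-!
Let `H = ρ - I/D` and let `R` be the spectral projection onto the negative eigenspace of `H`;
since `tr H = 0`, `½‖H‖₁ = -Re tr (R H)`. Write `R = [[R₁, S], [Sᴴ, R₂]]` and
`ρ = [[A, B], [Bᴴ, C]]` in blocks along `H₁ ⊕ H₂`, and `Δ = A - I/D`. Then
`½‖H‖₁ = -Re tr (R₁ Δ) + tr R₂ / D - 2 Re tr (Sᴴ B) - Re tr (R₂ C)`.
As `0 ≤ R₁ ≤ 1`, the first term is at most `tr Δ⁻`, and the second is at most `d₂/D`.
Positivity of `ρ` factors `B = A^½ K C^½` with `K` a contraction (after perturbing `A` and `C`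
to be invertible), so `-2 Re tr (Sᴴ B) ≤ tr (Sᴴ S C) + tr (A K Kᴴ)`. Since `R² = R` we have
`Sᴴ S ≤ R₂`, and `tr (A K Kᴴ) ≤ tr Δ⁺ + tr (K Kᴴ) / D ≤ tr Δ⁺ + d₂/D`. Altogether
`½‖H‖₁ ≤ ‖Δ‖₁ + 2 d₂/D ≤ 2δ + 2ε`.
-/

open scoped MatrixOrder
open Matrix

namespace Matrix

section

variable {n m : Type} {α : Type*}

lemma IsHermitian.eq_fromBlocks [Star α] {M : Matrix (n ⊕ m) (n ⊕ m) α} (hM : M.IsHermitian) :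
    M = Matrix.fromBlocks M.toBlocks₁₁ M.toBlocks₁₂ M.toBlocks₁₂ᴴ M.toBlocks₂₂ := by
  conv_lhs => rw [← fromBlocks_toBlocks M]
  congr
  nth_rw 1 [← hM.eq]
  rfl

lemma trace_fromBlocks [Fintype n] [Fintype m] [AddCommMonoid α] (A : Matrix n n α)
    (B : Matrix n m α) (C : Matrix m n α) (D : Matrix m m α) :
    (fromBlocks A B C D).trace = A.trace + D.trace := by
  simp [trace, Fintype.sum_sum_type]

variable [DecidableEq n] [DecidableEq m] [Zero α] [One α]

@[simp]
lemma toBlocks₁₁_one : (1 : Matrix (n ⊕ m) (n ⊕ m) α).toBlocks₁₁ = 1 := by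
  rw [← diagonal_one, toBlocks₁₁_diagonal, diagonal_one]

@[simp]
lemma toBlocks₂₂_one : (1 : Matrix (n ⊕ m) (n ⊕ m) α).toBlocks₂₂ = 1 := by
  rw [← diagonal_one, toBlocks₂₂_diagonal, diagonal_one]

end

variable {n m : Type}

lemma toBlocks₁₁_mono {M M' : Matrix (n ⊕ m) (n ⊕ m) ℂ} (h : M ≤ M') :
    M.toBlocks₁₁ ≤ M'.toBlocks₁₁ :=
  le_iff.2 ((le_iff.1 h).submatrix Sum.inl)

lemma toBlocks₂₂_mono {M M' : Matrix (n ⊕ m) (n ⊕ m) ℂ} (h : M ≤ M') :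
    M.toBlocks₂₂ ≤ M'.toBlocks₂₂ :=
  le_iff.2 ((le_iff.1 h).submatrix Sum.inr)

variable [Fintype n] [Fintype m]

lemma re_trace_nonneg {P : Matrix n n ℂ} (hP : 0 ≤ P) : 0 ≤ P.trace.re :=
  (Complex.le_def.1 (nonneg_iff_posSemidef.1 hP).trace_nonneg).1

lemma re_trace_mono {P Q : Matrix n n ℂ} (h : P ≤ Q) : P.trace.re ≤ Q.trace.re := by
  simpa [trace_sub] using re_trace_nonneg (sub_nonneg.2 h)

lemma two_re_trace_conjTranspose_mul_le (X Y : Matrix n m ℂ) :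
    2 * (Xᴴ * Y).trace.re ≤ (Xᴴ * X).trace.re + (Yᴴ * Y).trace.re := by
  have h := (Complex.le_def.1 (posSemidef_conjTranspose_mul_self (X - Y)).trace_nonneg).1
  have hconj : (Yᴴ * X).trace.re = (Xᴴ * Y).trace.re := by
    rw [← conjTranspose_conjTranspose X, ← conjTranspose_mul, trace_conjTranspose]
    simp
  rw [conjTranspose_sub, Matrix.sub_mul, Matrix.mul_sub, Matrix.mul_sub] at h
  simp only [trace_sub, Complex.sub_re, Complex.zero_re] at h
  linarith

lemma re_trace_fromBlocks_mul_fromBlocks (R₁ : Matrix n n ℂ) (S : Matrix n m ℂ)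
    (R₂ : Matrix m m ℂ) (A : Matrix n n ℂ) (B : Matrix n m ℂ) (C : Matrix m m ℂ) :
    (fromBlocks R₁ S Sᴴ R₂ * fromBlocks A B Bᴴ C).trace.re =
      (R₁ * A).trace.re + 2 * (Sᴴ * B).trace.re + (R₂ * C).trace.re := by
  have hconj : (S * Bᴴ).trace.re = (Sᴴ * B).trace.re := by
    rw [trace_mul_comm, ← conjTranspose_conjTranspose B, ← conjTranspose_mul, trace_conjTranspose,
      conjTranspose_conjTranspose]
    simp
  rw [fromBlocks_multiply, trace_fromBlocks, trace_add, trace_add]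
  simp only [Complex.add_re]
  linarith

lemma IsStarProjection.conjTranspose_mul_self_le {R₁ : Matrix n n ℂ} {S : Matrix n m ℂ}
    {R₂ : Matrix m m ℂ} (h : IsStarProjection (fromBlocks R₁ S Sᴴ R₂)) : Sᴴ * S ≤ R₂ := by
  have hR₂ : R₂ᴴ = R₂ := by
    have := congr_arg toBlocks₂₂ h.isSelfAdjoint.star_eq
    rwa [star_eq_conjTranspose, fromBlocks_conjTranspose, toBlocks_fromBlocks₂₂] at this
  have hsq : Sᴴ * S + R₂ * R₂ = R₂ := by
    simpa [fromBlocks_multiply] using congr_arg toBlocks₂₂ h.isIdempotentElem.eq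
  rw [← sub_nonneg, ← hsq, add_sub_cancel_left]
  nth_rw 1 [← hR₂]
  exact star_mul_self_nonneg R₂

variable [DecidableEq n] [DecidableEq m]

lemma re_trace_mul_nonneg {P Q : Matrix n n ℂ} (hP : 0 ≤ P) (hQ : 0 ≤ Q) :
    0 ≤ (P * Q).trace.re := by
  have hsqrt := (CFC.sqrt_nonneg P).isSelfAdjoint
  have : (P * Q).trace = (CFC.sqrt P * Q * CFC.sqrt P).trace := by
    rw [trace_mul_cycle, CFC.sqrt_mul_sqrt_self P hP]
  rw [this]
  exact re_trace_nonneg (hsqrt.conjugate_nonneg hQ)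

lemma re_trace_mul_le_re_trace {P N : Matrix n n ℂ} (hP : 0 ≤ P) (hN : N ≤ 1) :
    (P * N).trace.re ≤ P.trace.re := by
  have := re_trace_mul_nonneg hP (sub_nonneg.2 hN)
  rw [mul_sub, mul_one, trace_sub, Complex.sub_re] at this
  linarith

lemma re_trace_mul_le_re_trace_posPart {Δ N : Matrix n n ℂ} (hΔ : IsSelfAdjoint Δ)
    (hN : 0 ≤ N) (hN1 : N ≤ 1) : (Δ * N).trace.re ≤ (Δ⁺).trace.re := by
  have h₁ := re_trace_mul_le_re_trace (CFC.posPart_nonneg Δ) hN1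
  have h₂ := re_trace_mul_nonneg (CFC.negPart_nonneg Δ) hN
  conv_lhs => rw [← CFC.posPart_sub_negPart Δ hΔ]
  rw [sub_mul, trace_sub, Complex.sub_re]
  linarith

lemma neg_re_trace_mul_le_re_trace_negPart {Δ N : Matrix n n ℂ} (hΔ : IsSelfAdjoint Δ)
    (hN : 0 ≤ N) (hN1 : N ≤ 1) : -(Δ * N).trace.re ≤ (Δ⁻).trace.re := by
  simpa [CFC.posPart_neg] using re_trace_mul_le_re_trace_posPart hΔ.neg hN hN1

lemma fromBlocks_nonneg {P : Matrix n n ℂ} {Q : Matrix m m ℂ} (hP : 0 ≤ P) (hQ : 0 ≤ Q) :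
    0 ≤ fromBlocks P 0 0 Q := by
  have hsP := (CFC.sqrt_nonneg P).isSelfAdjoint
  have hsQ := (CFC.sqrt_nonneg Q).isSelfAdjoint
  rw [← CFC.sqrt_mul_sqrt_self P hP, ← CFC.sqrt_mul_sqrt_self Q hQ]
  convert star_mul_self_nonneg (fromBlocks (CFC.sqrt P) 0 0 (CFC.sqrt Q)) using 1
  rw [star_eq_conjTranspose, fromBlocks_conjTranspose, fromBlocks_multiply,
    ← star_eq_conjTranspose, ← star_eq_conjTranspose, hsP.star_eq, hsQ.star_eq]
  simp

lemma exists_isStarProjection_mul_eq_neg_negPart {H : Matrix n n ℂ} (hH : IsSelfAdjoint H) :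
    ∃ R : Matrix n n ℂ, IsStarProjection R ∧ R * H = -H⁻ := by
  set f : ℝ → ℝ := fun x => if x < 0 then 1 else 0
  have hf : ContinuousOn f (spectrum ℝ H) := H.finite_real_spectrum.continuousOn f
  refine ⟨cfc f H, ⟨?_, cfc_predicate _ _⟩, ?_⟩
  · rw [IsIdempotentElem, ← cfc_mul f f H]
    exact cfc_congr fun x _ => by by_cases hx : x < 0 <;> simp [f, hx]
  · nth_rw 2 [← cfc_id' ℝ H]
    rw [← cfc_mul f (fun x => x) H, CFC.negPart_def, cfcₙ_eq_cfc, ← cfc_neg]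
    refine cfc_congr fun x _ => ?_
    by_cases hx : x < 0
    · simp [f, hx, hx.le]
    · simp [f, hx, not_lt.1 hx]

lemma contraction_of_posSemidef_fromBlocks_one {K : Matrix n m ℂ}
    (h : (fromBlocks 1 K Kᴴ 1).PosSemidef) : K * Kᴴ ≤ 1 ∧ Kᴴ * K ≤ 1 := by
  let _ : Invertible (1 : Matrix n n ℂ) := invertibleOne
  let _ : Invertible (1 : Matrix m m ℂ) := invertibleOne
  constructor
  · simpa [le_iff] using (PosDef.fromBlocks₂₂ 1 K PosDef.one).1 h
  · simpa [le_iff] using (PosDef.fromBlocks₁₁ K 1 PosDef.one).1 h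

lemma exists_contraction_of_posDef {A : Matrix n n ℂ} {B : Matrix n m ℂ} {C : Matrix m m ℂ}
    (hA : A.PosDef) (hC : C.PosDef) (h : (fromBlocks A B Bᴴ C).PosSemidef) :
    ∃ K : Matrix n m ℂ, B = CFC.sqrt A * K * CFC.sqrt C ∧ K * Kᴴ ≤ 1 ∧ Kᴴ * K ≤ 1 := by
  set F := CFC.sqrt A
  set G := CFC.sqrt C
  have hF : Fᴴ = F := (CFC.sqrt_nonneg A).isSelfAdjoint
  have hG : Gᴴ = G := (CFC.sqrt_nonneg C).isSelfAdjoint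
  have hFF : F * F = A := CFC.sqrt_mul_sqrt_self A hA.posSemidef.nonneg
  have hGG : G * G = C := CFC.sqrt_mul_sqrt_self C hC.posSemidef.nonneg
  have hFu : IsUnit F.det :=
    (isUnit_iff_isUnit_det F).1 (isUnit_of_mul_isUnit_left (hFF ▸ hA.isUnit))
  have hGu : IsUnit G.det :=
    (isUnit_iff_isUnit_det G).1 (isUnit_of_mul_isUnit_left (hGG ▸ hC.isUnit))
  have hFinv : F⁻¹ * (F * F) * F⁻¹ = 1 := by
    rw [← Matrix.mul_assoc, nonsing_inv_mul _ hFu, Matrix.one_mul, mul_nonsing_inv _ hFu]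
  have hGinv : G⁻¹ * (G * G) * G⁻¹ = 1 := by
    rw [← Matrix.mul_assoc, nonsing_inv_mul _ hGu, Matrix.one_mul, mul_nonsing_inv _ hGu]
  refine ⟨F⁻¹ * B * G⁻¹, ?_, contraction_of_posSemidef_fromBlocks_one ?_⟩
  -- conjugating by `fromBlocks F⁻¹ 0 0 G⁻¹` turns the block matrix into `fromBlocks 1 K Kᴴ 1`
  · rw [← Matrix.mul_assoc, ← Matrix.mul_assoc, mul_nonsing_inv _ hFu, Matrix.one_mul,
      Matrix.mul_assoc, nonsing_inv_mul _ hGu, Matrix.mul_one]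
  · have hD : (fromBlocks F⁻¹ 0 0 G⁻¹)ᴴ = fromBlocks F⁻¹ 0 0 G⁻¹ := by
      rw [fromBlocks_conjTranspose, conjTranspose_nonsing_inv, conjTranspose_nonsing_inv, hF, hG]
      simp
    convert h.conjTranspose_mul_mul_same (fromBlocks F⁻¹ 0 0 G⁻¹) using 1
    rw [hD, fromBlocks_multiply, fromBlocks_multiply, ← hFF, ← hGG]
    simp [conjTranspose_nonsing_inv, hF, hG, hFinv, hGinv, Matrix.mul_assoc]

lemma exists_neg_two_re_trace_le_of_posDef {A : Matrix n n ℂ} {B : Matrix n m ℂ}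
    {C : Matrix m m ℂ} (hA : A.PosDef) (hC : C.PosDef) (h : (fromBlocks A B Bᴴ C).PosSemidef)
    (S : Matrix n m ℂ) :
    ∃ N : Matrix n n ℂ, 0 ≤ N ∧ N ≤ 1 ∧ N.trace.re ≤ Fintype.card m ∧
      -(2 * (Sᴴ * B).trace.re) ≤ (Sᴴ * S * C).trace.re + (A * N).trace.re := by
  obtain ⟨K, rfl, hK, hK'⟩ := exists_contraction_of_posDef hA hC h
  set F := CFC.sqrt A
  set G := CFC.sqrt C
  have hF : Fᴴ = F := (CFC.sqrt_nonneg A).isSelfAdjoint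
  have hG : Gᴴ = G := (CFC.sqrt_nonneg C).isSelfAdjoint
  have hFF : F * F = A := CFC.sqrt_mul_sqrt_self A hA.posSemidef.nonneg
  have hGG : G * G = C := CFC.sqrt_mul_sqrt_self C hC.posSemidef.nonneg
  refine ⟨K * Kᴴ, nonneg_iff_posSemidef.2 (posSemidef_self_mul_conjTranspose K), hK, ?_, ?_⟩
  · simpa [trace_mul_comm K] using re_trace_mono hK'
  · have hCS := two_re_trace_conjTranspose_mul_le (S * G) (-(F * K))
    have e₁ : ((S * G)ᴴ * -(F * K)).trace = -(Sᴴ * (F * K * G)).trace := by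
      rw [conjTranspose_mul, hG, Matrix.mul_neg, trace_neg, Matrix.mul_assoc, trace_mul_comm G]
      simp only [Matrix.mul_assoc]
    have e₂ : ((S * G)ᴴ * (S * G)).trace = (Sᴴ * S * C).trace := by
      rw [conjTranspose_mul, hG, Matrix.mul_assoc, trace_mul_comm G, ← hGG]
      simp only [Matrix.mul_assoc]
    have e₃ : ((-(F * K))ᴴ * -(F * K)).trace = (A * (K * Kᴴ)).trace := by
      rw [conjTranspose_neg, Matrix.neg_mul, Matrix.mul_neg, neg_neg, conjTranspose_mul, hF,
        Matrix.mul_assoc, trace_mul_comm Kᴴ, ← hFF]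
      simp only [Matrix.mul_assoc]
    rw [e₁, e₂, e₃, Complex.neg_re] at hCS
    linarith

lemma exists_neg_two_re_trace_le {A : Matrix n n ℂ} {B : Matrix n m ℂ} {C : Matrix m m ℂ}
    (h : (fromBlocks A B Bᴴ C).PosSemidef) (S : Matrix n m ℂ) {η : ℝ} (hη : 0 < η) :
    ∃ N : Matrix n n ℂ, 0 ≤ N ∧ N ≤ 1 ∧ N.trace.re ≤ Fintype.card m ∧
      -(2 * (Sᴴ * B).trace.re) ≤ (Sᴴ * S * C).trace.re + (A * N).trace.re + η := by
  -- perturb `A` and `C` by `t • 1` to make them invertible; this costs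
  -- `t * ((Sᴴ * S).trace.re + N.trace.re) ≤ t * κ = η`
  have hSS : 0 ≤ (Sᴴ * S).trace.re :=
    re_trace_nonneg (nonneg_iff_posSemidef.2 (posSemidef_conjTranspose_mul_self S))
  set κ := (Sᴴ * S).trace.re + Fintype.card m + 1
  have hκ : 0 < κ := by positivity
  set t := η / κ
  have ht : 0 < t := div_pos hη hκ
  have hA : (A + t • 1).PosDef := PosDef.posSemidef_add (h.submatrix Sum.inl) (PosDef.one.smul ht)
  have hC : (C + t • 1).PosDef := PosDef.posSemidef_add (h.submatrix Sum.inr) (PosDef.one.smul ht)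
  have hρ : (fromBlocks (A + t • 1) B Bᴴ (C + t • 1)).PosSemidef := by
    convert h.add (PosSemidef.one.smul ht.le) using 1
    rw [← fromBlocks_one, fromBlocks_smul, fromBlocks_add]
    simp
  obtain ⟨N, hN, hN1, htrN, hle⟩ := exists_neg_two_re_trace_le_of_posDef hA hC hρ S
  refine ⟨N, hN, hN1, htrN, ?_⟩
  have hκt : t * κ = η := div_mul_cancel₀ η hκ.ne'
  simp only [Matrix.mul_add, Matrix.add_mul, Matrix.mul_smul, Matrix.smul_mul, Matrix.mul_one,
    Matrix.one_mul, trace_add, trace_smul, Complex.add_re, Complex.smul_re, smul_eq_mul] at hle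
  nlinarith

lemma neg_two_re_trace_sub_re_trace_le {A : Matrix n n ℂ} {B : Matrix n m ℂ} {C : Matrix m m ℂ}
    (h : (fromBlocks A B Bᴴ C).PosSemidef) {S : Matrix n m ℂ} {R₂ : Matrix m m ℂ}
    (hS : Sᴴ * S ≤ R₂) {c : ℝ} (hc : 0 ≤ c) {η : ℝ} (hη : 0 < η) :
    -(2 * (Sᴴ * B).trace.re) - (R₂ * C).trace.re ≤
      ((A - c • 1)⁺).trace.re + c * Fintype.card m + η := by
  obtain ⟨N, hN, hN1, htrN, hle⟩ := exists_neg_two_re_trace_le h S hη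
  have hSC : (Sᴴ * S * C).trace.re ≤ (R₂ * C).trace.re := by
    have := re_trace_mul_nonneg (sub_nonneg.2 hS) (nonneg_iff_posSemidef.2 (h.submatrix Sum.inr))
    rwa [Matrix.sub_mul, trace_sub, Complex.sub_re, sub_nonneg] at this
  have hΔ : IsSelfAdjoint (A - c • 1) :=
    (h.submatrix Sum.inl).isHermitian.sub ((IsSelfAdjoint.all c).smul (IsSelfAdjoint.one _))
  have hΔN := re_trace_mul_le_re_trace_posPart hΔ hN hN1
  rw [Matrix.sub_mul, Matrix.smul_mul, Matrix.one_mul, trace_sub, trace_smul, Complex.sub_re,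
    Complex.smul_re, smul_eq_mul] at hΔN
  nlinarith [mul_le_mul_of_nonneg_left htrN hc]

end Matrix

section TraceNorm

variable {n m : Type} [Fintype n] [DecidableEq n] [Fintype m] [DecidableEq m]

lemma traceNorm_eq_re_trace_abs (A : Matrix n n ℂ) : traceNorm A = (CFC.abs A).trace.re := by
  have h := posSemidef_conjTranspose_mul_self A
  rw [CFC.abs, star_eq_conjTranspose, CFC.sqrt_eq_cfc, cfc_nnreal_eq_real _ _, h.1.cfc_eq,
    IsHermitian.cfc, Unitary.conjStarAlgAut_apply, traceNorm]
  congr 5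
  funext i
  simp [max_eq_left (h.eigenvalues_nonneg i)]

lemma traceNorm_eq_re_trace_posPart_add_negPart {A : Matrix n n ℂ} (hA : IsSelfAdjoint A) :
    traceNorm A = (A⁺).trace.re + (A⁻).trace.re := by
  rw [traceNorm_eq_re_trace_abs, ← CFC.posPart_add_negPart A hA, trace_add, Complex.add_re]

lemma traceNorm_fromBlocks_zero (X : Matrix n n ℂ) :
    traceNorm (fromBlocks X 0 0 (0 : Matrix m m ℂ)) = traceNorm X := by
  have habs : CFC.abs (fromBlocks X 0 0 (0 : Matrix m m ℂ)) = fromBlocks (CFC.abs X) 0 0 0 := by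
    have h0 : (0 : Matrix (n ⊕ m) (n ⊕ m) ℂ) ≤ fromBlocks (CFC.abs X) 0 0 0 :=
      fromBlocks_nonneg (CFC.abs_nonneg X) le_rfl
    rw [CFC.abs, CFC.sqrt_eq_iff _ _ (star_mul_self_nonneg _) h0, fromBlocks_multiply,
      CFC.abs_mul_abs, star_eq_conjTranspose, star_eq_conjTranspose, fromBlocks_conjTranspose,
      fromBlocks_multiply]
    simp
  rw [traceNorm_eq_re_trace_abs, habs, trace_fromBlocks, traceNorm_eq_re_trace_abs]
  simp

lemma exists_isStarProjection_half_traceNorm_eq {H : Matrix n n ℂ} (hH : IsSelfAdjoint H)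
    (htr : H.trace = 0) :
    ∃ R : Matrix n n ℂ, IsStarProjection R ∧ 1 / 2 * traceNorm H = -(R * H).trace.re := by
  obtain ⟨R, hR, hRH⟩ := exists_isStarProjection_mul_eq_neg_negPart hH
  refine ⟨R, hR, ?_⟩
  have h0 : (H⁺).trace.re - (H⁻).trace.re = 0 := by
    rw [← Complex.sub_re, ← trace_sub, CFC.posPart_sub_negPart H hH, htr, Complex.zero_re]
  rw [traceNorm_eq_re_trace_posPart_add_negPart hH, hRH, trace_neg, Complex.neg_re, neg_neg]
  linarith

theorem half_traceNorm_sub_smul_one_le {ρ : Matrix (n ⊕ m) (n ⊕ m) ℂ} (hρ : ρ.PosSemidef)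
    {c : ℝ} (hc : 0 ≤ c) (htr : ρ.trace = c * Fintype.card (n ⊕ m)) :
    1 / 2 * traceNorm (ρ - c • 1) ≤
      traceNorm (ρ.toBlocks₁₁ - c • 1) + 2 * c * Fintype.card m := by
  have hc1 {k : Type} [Fintype k] [DecidableEq k] : IsSelfAdjoint (c • (1 : Matrix k k ℂ)) :=
    (IsSelfAdjoint.all c).smul (IsSelfAdjoint.one _)
  obtain ⟨A, B, C, rfl⟩ : ∃ A B C, ρ = fromBlocks A B Bᴴ C :=
    ⟨_, _, _, hρ.isHermitian.eq_fromBlocks⟩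
  have hΔ : IsSelfAdjoint (A - c • 1) := (hρ.submatrix Sum.inl).isHermitian.sub hc1
  obtain ⟨R, hR, hhalf⟩ := exists_isStarProjection_half_traceNorm_eq
    (hρ.isHermitian.sub hc1) (by simp [trace_sub, htr]; ring)
  obtain ⟨R₁, S, R₂, rfl⟩ : ∃ R₁ S R₂, R = fromBlocks R₁ S Sᴴ R₂ :=
    ⟨_, _, _, IsHermitian.eq_fromBlocks hR.isSelfAdjoint⟩
  have hR₁ : 0 ≤ R₁ := toBlocks₁₁_mono hR.nonneg
  have hR₁' : R₁ ≤ 1 := by simpa using toBlocks₁₁_mono hR.le_one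
  have hR₂ : R₂.trace.re ≤ Fintype.card m := by
    simpa using re_trace_mono (toBlocks₂₂_mono hR.le_one)
  have hΔR₁ := neg_re_trace_mul_le_re_trace_negPart hΔ hR₁ hR₁'
  rw [Matrix.sub_mul, Matrix.smul_mul, Matrix.one_mul, trace_sub, trace_smul, trace_mul_comm,
    Complex.sub_re, Complex.smul_re, smul_eq_mul] at hΔR₁
  rw [hhalf, Matrix.mul_sub, Matrix.mul_smul, Matrix.mul_one, trace_sub, trace_smul, Complex.sub_re,
    Complex.smul_re, smul_eq_mul, re_trace_fromBlocks_mul_fromBlocks, trace_fromBlocks,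
    Complex.add_re, toBlocks_fromBlocks₁₁, traceNorm_eq_re_trace_posPart_add_negPart hΔ]
  refine le_of_forall_pos_le_add fun η hη => ?_
  have hcross := neg_two_re_trace_sub_re_trace_le hρ hR.conjTranspose_mul_self_le hc hη
  nlinarith [mul_le_mul_of_nonneg_left hR₂ hc]

end TraceNorm

/-- If a density matrix `ρ` on `H = H₁ ⊕ H₂` (`dim H = D = d₁ + d₂`, `d₂/D ≤ ε`) has
`H₁`-compression `δ`-close in trace distance to the `H₁`-block `Π₁/D` of the maximally
mixed state, then `ρ` is `(2δ + 2ε)`-close in trace distance to `I/D`. -/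
theorem stmt14 (d₁ d₂ : ℕ) (ε δ : ℝ)
    (hε : (d₂ : ℝ) / ((d₁ : ℝ) + (d₂ : ℝ)) ≤ ε)
    (ρ : Matrix (Fin d₁ ⊕ Fin d₂) (Fin d₁ ⊕ Fin d₂) ℂ)
    (hρ : ρ.PosSemidef) (htr : ρ.trace = 1)
    (P1 : Matrix (Fin d₁ ⊕ Fin d₂) (Fin d₁ ⊕ Fin d₂) ℂ)
    (hP1 : P1 = Matrix.fromBlocks 1 0 0 0)
    (hclose : (1 / 2 : ℝ) * traceNorm (P1 * ρ * P1 - (((d₁ : ℂ) + (d₂ : ℂ))⁻¹) • P1) ≤ δ) :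
    (1 / 2 : ℝ) * traceNorm (ρ - (((d₁ : ℂ) + (d₂ : ℂ))⁻¹) • (1 : Matrix _ _ ℂ))
      ≤ 2 * δ + 2 * ε := by
  subst hP1
  have hD : 0 < (d₁ : ℝ) + d₂ := by
    rcases Nat.eq_zero_or_pos (d₁ + d₂) with h | h
    · obtain ⟨rfl, rfl⟩ : d₁ = 0 ∧ d₂ = 0 := by omega
      simp [trace] at htr
    · exact_mod_cast h
  have hscalar : ((d₁ : ℂ) + (d₂ : ℂ))⁻¹ = (((d₁ + d₂ : ℝ))⁻¹ : ℝ) := by push_cast; rfl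
  have hcompress : fromBlocks 1 0 0 0 * ρ * fromBlocks 1 0 0 0 -
      ((d₁ + d₂ : ℝ))⁻¹ • fromBlocks 1 0 0 0 =
      fromBlocks (ρ.toBlocks₁₁ - ((d₁ + d₂ : ℝ))⁻¹ • 1) 0 0 (0 : Matrix (Fin d₂) (Fin d₂) ℂ) := by
    conv_lhs => rw [← fromBlocks_toBlocks ρ]
    simp [fromBlocks_multiply, fromBlocks_smul, sub_eq_add_neg, fromBlocks_neg, fromBlocks_add]
  rw [hscalar, Complex.coe_smul, hcompress, traceNorm_fromBlocks_zero] at hclose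
  rw [hscalar, Complex.coe_smul]
  have hcore := half_traceNorm_sub_smul_one_le hρ (inv_nonneg.2 hD.le)
    (by rw [htr, Fintype.card_sum, Fintype.card_fin, Fintype.card_fin]; push_cast
        exact (inv_mul_cancel₀ (by exact_mod_cast hD.ne')).symm)
  have hεD : ((d₁ + d₂ : ℝ))⁻¹ * d₂ ≤ ε := by rwa [inv_mul_eq_div]
  simp only [Fintype.card_fin] at hcore
  linarith
end
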